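/- For every real u > 0 with u ≠ 1, one has f(1/u) = -u · f(u). -/

import Mathlib

/-- The modified logarithm `𝓛ₘ(u)`. -/
noncomputable def modifiedLog (m : ℕ) (u : ℝ) : ℝ :=
  (-1) ^ m * (u - 1) ^ (-(m + 1 : ℤ)) *
    (Real.log u - ∑ j ∈ Finset.Icc 1 m, (-1) ^ (j + 1) * (u - 1) ^ j / j)

/-- The function `f(u) = (1/6)u^(-1/2) - 1/3 + 𝓛₁(u) - 2(1+u^(1/2))𝓛₂(u) + (1+u^(1/2))²𝓛₃(u)`. -/
noncomputable def fCT (u : ℝ) : ℝ :=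
  (1 / 6) * u ^ (-(1 : ℝ) / 2) - 1 / 3 + modifiedLog 1 u
    - 2 * (1 + u ^ ((1 : ℝ) / 2)) * modifiedLog 2 u
    + (1 + u ^ ((1 : ℝ) / 2)) ^ 2 * modifiedLog 3 u

/-!
The modified logarithms obey the recursion `𝓛ₘ₊₁(u) = (1/(m+1) - 𝓛ₘ(u)) / (u - 1)`, starting from
`𝓛₀(u) = log u / (u - 1)`, and `𝓛₀(1/u) = u 𝓛₀(u)`. Writing `u = s²`, the function `f(u)` is
therefore a rational function of `s` and `𝓛₀(u)`, and `u ↦ 1/u` acts as `s ↦ 1/s`,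
`𝓛₀ ↦ s² 𝓛₀`; the functional equation becomes an identity between rational functions.
-/

open Real

lemma modifiedLog_eq_div (m : ℕ) (u : ℝ) :
    modifiedLog m u = (-1) ^ m *
      (log u - ∑ j ∈ Finset.Icc 1 m, (-1) ^ (j + 1) * (u - 1) ^ j / j) / (u - 1) ^ (m + 1) := by
  rw [modifiedLog, show -(m + 1 : ℤ) = -((m + 1 : ℕ) : ℤ) by push_cast; ring, zpow_neg,
    zpow_natCast]
  ring

lemma modifiedLog_zero (u : ℝ) : modifiedLog 0 u = log u / (u - 1) := by
  simp [modifiedLog_eq_div]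

lemma modifiedLog_succ (m : ℕ) (u : ℝ) :
    modifiedLog (m + 1) u = (1 / (m + 1) - modifiedLog m u) / (u - 1) := by
  rcases eq_or_ne u 1 with rfl | hu
  · -- both sides vanish, since `0 ^ (-n) = 0` and `x / 0 = 0`
    simp [modifiedLog_eq_div]
  have hx : u - 1 ≠ 0 := sub_ne_zero.mpr hu
  rw [modifiedLog_eq_div, modifiedLog_eq_div, Finset.sum_Icc_succ_top (by omega)]
  push_cast
  rcases neg_one_pow_eq_or ℝ m with he | he <;>
  · simp only [pow_succ (-1 : ℝ), he]
    field_simp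
    ring

lemma modifiedLog_zero_inv (u : ℝ) : modifiedLog 0 u⁻¹ = u * modifiedLog 0 u := by
  rcases eq_or_ne u 0 with rfl | hu
  · simp [modifiedLog_zero]
  rcases eq_or_ne u 1 with rfl | hu1
  · simp [modifiedLog_zero]
  have hx : u - 1 ≠ 0 := sub_ne_zero.mpr hu1
  rw [modifiedLog_zero, modifiedLog_zero, log_inv]
  field_simp
  ring

lemma fCT_sq {s : ℝ} (hs : 0 < s) :
    fCT (s ^ 2) = 1 / (6 * s) - 1 / 3 + modifiedLog 1 (s ^ 2) - 2 * (1 + s) * modifiedLog 2 (s ^ 2)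
      + (1 + s) ^ 2 * modifiedLog 3 (s ^ 2) := by
  have hsqrt : (s ^ 2) ^ ((1 : ℝ) / 2) = s := by
    rw [← sqrt_eq_rpow, sqrt_sq hs.le]
  have hinv : (s ^ 2) ^ (-(1 : ℝ) / 2) = 1 / s := by
    rw [neg_div, rpow_neg (by positivity), hsqrt, one_div]
  rw [fCT, hsqrt, hinv]
  ring

/-- The functional equation `f(1/u) = -u·f(u)` for `u > 0`, `u ≠ 1`. -/
theorem fCT_functional_equation (u : ℝ) (hu : 0 < u) (hu1 : u ≠ 1) :
    fCT (1 / u) = -u * fCT u := by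
  obtain ⟨s, hs, rfl⟩ : ∃ s, 0 < s ∧ s ^ 2 = u := ⟨√u, sqrt_pos.mpr hu, sq_sqrt hu.le⟩
  have hx : s ^ 2 - 1 ≠ 0 := sub_ne_zero.mpr hu1
  rw [one_div, ← inv_pow, fCT_sq (inv_pos.mpr hs), fCT_sq hs]
  simp only [modifiedLog_succ 2, modifiedLog_succ 1, modifiedLog_succ 0]
  rw [inv_pow, modifiedLog_zero_inv]
  field_simp
  ring
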